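/- arXiv:2203.12681 — 2 statements merged into one kernel-verified Lean document; each statement's English description precedes it below -/
import Mathlib

section
/- Under the SPS iteration on a nonempty closed convex set Ω ⊆ E, suppose f : E → ℝ is convex and continuous, x* ∈ Ω satisfies f(x*) ≤ f(y) for all y ∈ Ω, there is G > 0 with ‖g_k‖ ≤ G for all k ≥ 1, the errors ē_k := |f_k(x_k) − f(x_k)| + |f_k(x*) − f(x*)| satisfy Σ_{k≥1} ē_k/k < ∞, and for every compact set K ⊆ E one has sup_{x ∈ K} |f_k(x) − f(x)| → 0 as k → ∞. Then liminf_{k→∞} f(x_k) = f(x*). -/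
/-!
Expanding the square in the nonexpansive projection step and using the inexact subgradient
inequality at `x*` gives
`‖x_{k+1} - x*‖² ≤ ‖x_k - x*‖² - 2 c_k (f(x_k) - f(x*)) + 2 c_k ē_k + c_k² G²`, `c_k = α_k ζ_k`.
As `c_k ≍ 1/k`, the error terms are summable and the inequality telescopes to
`∑ (f(x_k) - f(x*))/k < ∞`. The gaps are nonnegative because `x_k ∈ Ω`, and the harmonic
series diverges, so the gaps come arbitrarily close to `0` infinitely often.
-/

open scoped RealInnerProductSpace
open Filter

theorem gap_div_le_of_stepsize_bounds {A B G c k gap e r D : ℝ} (hk : 0 < k) (hA : 0 ≤ A)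
    (hcA : A / k ≤ c) (hcB : c ≤ B / k) (hgap : 0 ≤ gap) (he : 0 ≤ e) (hr : 0 ≤ r)
    (hrG : r ≤ G) (h : 2 * c * gap ≤ D + 2 * c * e + c ^ 2 * r ^ 2) :
    2 * A * (gap / k) ≤ D + 2 * B * (e / k) + (B * G) ^ 2 * (1 / k ^ 2) := by
  have hc : 0 ≤ c := (div_nonneg hA hk.le).trans hcA
  have h1 : 2 * A * (gap / k) ≤ 2 * c * gap := by
    rw [← mul_div_assoc, mul_div_right_comm, mul_div_assoc]
    gcongr
  have h2 : 2 * c * e ≤ 2 * B * (e / k) := by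
    rw [← mul_div_assoc, mul_div_right_comm, mul_div_assoc]
    gcongr
  have h3 : c ^ 2 * r ^ 2 ≤ (B * G) ^ 2 * (1 / k ^ 2) := by
    rw [← mul_pow, one_div, ← inv_pow, ← mul_pow, mul_right_comm, ← div_eq_mul_inv]
    have : c * r ≤ B / k * G := mul_le_mul hcB hrG hr (hc.trans hcB)
    gcongr
  linarith

theorem summable_of_le_sub_add {a b d : ℕ → ℝ} (hd : ∀ k, 0 ≤ d k) (ha : ∀ k, 0 ≤ a k)
    (hb : ∀ k, 0 ≤ b k) (hbs : Summable b) (h : ∀ k, d k ≤ a k - a (k + 1) + b k) :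
    Summable d := by
  refine summable_of_sum_range_le (c := a 0 + ∑' k, b k) hd fun m => ?_
  calc ∑ k ∈ Finset.range m, d k
      ≤ ∑ k ∈ Finset.range m, (a k - a (k + 1) + b k) := Finset.sum_le_sum fun k _ => h k
    _ = a 0 - a m + ∑ k ∈ Finset.range m, b k := by
        rw [Finset.sum_add_distrib, Finset.sum_range_sub']
    _ ≤ a 0 + ∑' k, b k := by
        have := hbs.sum_le_tsum (Finset.range m) fun k _ => hb k
        linarith [ha m]

theorem frequently_le_add_of_summable_div {u : ℕ → ℝ} {L ε : ℝ} (hε : 0 < ε)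
    (hu : Summable fun k : ℕ => (u k - L) / k) : ∃ᶠ k in atTop, u k ≤ L + ε := by
  by_contra hne
  rw [not_frequently] at hne
  have hε_div : Summable fun k : ℕ => ε * (1 / k) := by
    refine hu.of_norm_bounded_eventually_nat ?_
    filter_upwards [hne] with k hk
    rw [Real.norm_eq_abs, abs_of_nonneg (by positivity), ← mul_div_assoc, mul_one]
    gcongr
    linarith
  exact Real.not_summable_one_div_natCast ((summable_mul_left_iff hε.ne').1 hε_div)

theorem liminf_eq_of_summable_div {u : ℕ → ℝ} {L : ℝ} (hL : ∀ᶠ k in atTop, L ≤ u k)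
    (hu : Summable fun k : ℕ => (u k - L) / k) : liminf u atTop = L := by
  have hcobdd : IsCoboundedUnder (· ≥ ·) atTop u :=
    IsCoboundedUnder.of_frequently_le (frequently_le_add_of_summable_div one_pos hu)
  refine le_antisymm (le_of_forall_pos_le_add fun ε hε => ?_) (le_liminf_of_le hcobdd hL)
  exact liminf_le_of_frequently_le (frequently_le_add_of_summable_div hε hu) ⟨L, hL⟩

section ProjectedSubgradientStep

variable {E : Type*} [NormedAddCommGroup E] [InnerProductSpace ℝ E]

theorem sub_le_inner_add_abs_of_subgradient {f φ : E → ℝ} {g x y : E}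
    (hsub : ∀ z, φ x + ⟪g, z - x⟫ ≤ φ z) :
    f x - f y ≤ ⟪g, x - y⟫ + (|φ x - f x| + |φ y - f y|) := by
  have h := hsub y
  rw [← neg_sub x y, inner_neg_right] at h
  have hx := neg_abs_le (φ x - f x)
  have hy := le_abs_self (φ y - f y)
  linarith

theorem sq_dist_le_of_projected_step {x x' y g : E} {c : ℝ}
    (hstep : ‖x' - y‖ ≤ ‖x - c • g - y‖) :
    ‖x' - y‖ ^ 2 ≤ ‖x - y‖ ^ 2 - 2 * c * ⟪g, x - y⟫ + c ^ 2 * ‖g‖ ^ 2 := by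
  calc ‖x' - y‖ ^ 2 ≤ ‖(x - y) - c • g‖ ^ 2 := by
        rw [sub_right_comm]; gcongr
    _ = ‖x - y‖ ^ 2 - 2 * c * ⟪g, x - y⟫ + c ^ 2 * ‖g‖ ^ 2 := by
        rw [norm_sub_sq_real, real_inner_smul_right, real_inner_comm, norm_smul,
          Real.norm_eq_abs, mul_pow, sq_abs]
        ring

theorem gap_le_of_inexact_projected_step {f φ : E → ℝ} {x x' y g : E} {c : ℝ} (hc : 0 ≤ c)
    (hsub : ∀ z, φ x + ⟪g, z - x⟫ ≤ φ z) (hstep : ‖x' - y‖ ≤ ‖x - c • g - y‖) :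
    2 * c * (f x - f y) ≤ ‖x - y‖ ^ 2 - ‖x' - y‖ ^ 2
      + 2 * c * (|φ x - f x| + |φ y - f y|) + c ^ 2 * ‖g‖ ^ 2 := by
  have hgap := mul_le_mul_of_nonneg_left
    (sub_le_inner_add_abs_of_subgradient (f := f) (y := y) hsub) (by positivity : 0 ≤ 2 * c)
  have := sq_dist_le_of_projected_step hstep
  linarith

theorem sps_step_descent {f φ : E → ℝ} {x x' y g : E} {C1 C2 ζlo ζhi G α ζ : ℝ} {k : ℕ}
    (hk : 1 ≤ k) (hC1 : 0 < C1) (hζlo : 0 < ζlo) (hα : α ∈ Set.Icc (C1 / k) (C2 / k))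
    (hζ : ζ ∈ Set.Icc ζlo ζhi) (hsub : ∀ z, φ x + ⟪g, z - x⟫ ≤ φ z)
    (hstep : ‖x' - y‖ ≤ ‖x - (α * ζ) • g - y‖) (hy : f y ≤ f x) (hg : ‖g‖ ≤ G) :
    2 * (C1 * ζlo) * ((f x - f y) / k) ≤ ‖x - y‖ ^ 2 - ‖x' - y‖ ^ 2
      + 2 * (C2 * ζhi) * ((|φ x - f x| + |φ y - f y|) / k)
      + (C2 * ζhi * G) ^ 2 * (1 / k ^ 2) := by
  have hk0 : (0 : ℝ) < k := by exact_mod_cast hk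
  have hα0 : 0 ≤ α := (div_pos hC1 hk0).le.trans hα.1
  have hcA : C1 * ζlo / k ≤ α * ζ := by
    rw [mul_div_right_comm]
    exact mul_le_mul hα.1 hζ.1 hζlo.le hα0
  have hcB : α * ζ ≤ C2 * ζhi / k := by
    rw [mul_div_right_comm]
    exact mul_le_mul hα.2 hζ.2 (hζlo.le.trans hζ.1) (hα0.trans hα.2)
  refine gap_div_le_of_stepsize_bounds hk0 (by positivity) hcA hcB (sub_nonneg.2 hy)
    (by positivity) (norm_nonneg g) hg ?_
  exact gap_le_of_inexact_projected_step (mul_nonneg hα0 (hζlo.le.trans hζ.1)) hsub hstep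

end ProjectedSubgradientStep

theorem sps_liminf_optimal_closed_general {n : ℕ}
    (Ω : Set (EuclideanSpace ℝ (Fin n)))
    (C1 C2 ζlo ζhi : ℝ)
    (hC1 : 0 < C1) (hC12 : C1 ≤ C2) (hζlo : 0 < ζlo) (hζlohi : ζlo ≤ ζhi)
    (x : ℕ → EuclideanSpace ℝ (Fin n)) (hxΩ : ∀ k, 1 ≤ k → x k ∈ Ω)
    (fk : ℕ → EuclideanSpace ℝ (Fin n) → ℝ)
    (g : ℕ → EuclideanSpace ℝ (Fin n))
    (hsub : ∀ k, 1 ≤ k → ∀ z, fk k (x k) + ⟪g k, z - x k⟫ ≤ fk k z)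
    (ζ α : ℕ → ℝ)
    (hζ : ∀ k, 1 ≤ k → ζ k ∈ Set.Icc ζlo ζhi)
    (hα : ∀ k : ℕ, 1 ≤ k → α k ∈ Set.Icc (C1 / (k : ℝ)) (C2 / (k : ℝ)))
    (hproj : ∀ k, 1 ≤ k → ∀ y ∈ Ω,
      ‖x (k + 1) - y‖ ≤ ‖(x k - (α k * ζ k) • g k) - y‖)
    (f : EuclideanSpace ℝ (Fin n) → ℝ)
    (xstar : EuclideanSpace ℝ (Fin n)) (hxstarΩ : xstar ∈ Ω)
    (hmin : ∀ y ∈ Ω, f xstar ≤ f y)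
    (G : ℝ) (hgbd : ∀ k, 1 ≤ k → ‖g k‖ ≤ G)
    (ebar : ℕ → ℝ)
    (hebar : ∀ k, ebar k = |fk k (x k) - f (x k)| + |fk k xstar - f xstar|)
    (hesum : Summable (fun k : ℕ => ebar k / k)) :
    liminf (fun k => f (x k)) atTop = f xstar := by
  obtain rfl : ebar = _ := funext hebar
  have hC2 : 0 < C2 := hC1.trans_le hC12
  have hζhi : 0 < ζhi := hζlo.trans_le hζlohi
  set b : ℕ → ℝ := fun k =>
    2 * (C2 * ζhi) * ((|fk k (x k) - f (x k)| + |fk k xstar - f xstar|) / k)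
      + (C2 * ζhi * G) ^ 2 * (1 / (k : ℝ) ^ 2)
  have hbs : Summable b :=
    (hesum.mul_left _).add ((Real.summable_one_div_nat_pow.2 one_lt_two).mul_left _)
  have hgaps : Summable fun k : ℕ => (f (x k) - f xstar) / k := by
    refine (summable_mul_left_iff (by positivity : 2 * (C1 * ζlo) ≠ 0)).1
      ((summable_nat_add_iff 1).1 ?_)
    refine summable_of_le_sub_add (a := fun k => ‖x (k + 1) - xstar‖ ^ 2)
      (b := fun k => b (k + 1)) (fun k => ?_) (fun k => by positivity) (fun k => by positivity)
      ((summable_nat_add_iff 1).2 hbs) fun k => ?_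
    · exact mul_nonneg (by positivity)
        (div_nonneg (sub_nonneg.2 (hmin _ (hxΩ _ (Nat.le_add_left 1 k)))) k.succ.cast_nonneg)
    · have hk := Nat.le_add_left 1 k
      have := sps_step_descent hk hC1 hζlo (hα _ hk) (hζ _ hk) (hsub _ hk)
        (hproj _ hk _ hxstarΩ) (hmin _ (hxΩ _ hk)) (hgbd _ hk)
      linarith
  exact liminf_eq_of_summable_div
    (eventually_atTop.2 ⟨1, fun k hk => hmin _ (hxΩ k hk)⟩) hgaps

/-- Theorem 4, part 1 (pathwise): SPS iteration on a nonempty closed convex set; with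
summable errors `Σ ē_k/k < ∞` (which yields bounded iterates) and uniform convergence
of `f_k` to `f` on compact sets, one has `liminf f(x_k) = f(x*)`. -/
theorem sps_liminf_optimal_closed {n : ℕ}
    (Ω : Set (EuclideanSpace ℝ (Fin n)))
    (hΩne : Ω.Nonempty) (hΩclosed : IsClosed Ω) (hΩconv : Convex ℝ Ω)
    (C1 C2 ζlo ζhi : ℝ)
    (hC1 : 0 < C1) (hC12 : C1 ≤ C2) (hζlo : 0 < ζlo) (hζlohi : ζlo ≤ ζhi)
    (x : ℕ → EuclideanSpace ℝ (Fin n)) (hxΩ : ∀ k, 1 ≤ k → x k ∈ Ω)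
    (fk : ℕ → EuclideanSpace ℝ (Fin n) → ℝ)
    (hfkconv : ∀ k, ConvexOn ℝ Set.univ (fk k))
    (g : ℕ → EuclideanSpace ℝ (Fin n))
    (hsub : ∀ k, 1 ≤ k → ∀ z, fk k (x k) + ⟪g k, z - x k⟫ ≤ fk k z)
    (ζ α : ℕ → ℝ)
    (hζ : ∀ k, 1 ≤ k → ζ k ∈ Set.Icc ζlo ζhi)
    (hα : ∀ k : ℕ, 1 ≤ k → α k ∈ Set.Icc (C1 / (k : ℝ)) (C2 / (k : ℝ)))
    (hproj : ∀ k, 1 ≤ k → ∀ y ∈ Ω,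
      ‖x (k + 1) - y‖ ≤ ‖(x k - (α k * ζ k) • g k) - y‖)
    (f : EuclideanSpace ℝ (Fin n) → ℝ)
    (hfconv : ConvexOn ℝ Set.univ f) (hfcont : Continuous f)
    (xstar : EuclideanSpace ℝ (Fin n)) (hxstarΩ : xstar ∈ Ω)
    (hmin : ∀ y ∈ Ω, f xstar ≤ f y)
    (G : ℝ) (hG : 0 < G) (hgbd : ∀ k, 1 ≤ k → ‖g k‖ ≤ G)
    (ebar : ℕ → ℝ)
    (hebar : ∀ k, ebar k = |fk k (x k) - f (x k)| + |fk k xstar - f xstar|)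
    (hesum : Summable (fun k : ℕ => ebar k / k))
    (hucc : ∀ K : Set (EuclideanSpace ℝ (Fin n)), IsCompact K →
      Tendsto (fun k => sSup ((fun z => |fk k z - f z|) '' K)) atTop (nhds 0)) :
    liminf (fun k => f (x k)) atTop = f xstar :=
  sps_liminf_optimal_closed_general Ω C1 C2 ζlo ζhi hC1 hC12 hζlo hζlohi x hxΩ fk g hsub ζ α hζ hα
    hproj f xstar hxstarΩ hmin G hgbd ebar hebar hesum
end

section
/- Under the SPS iteration on a nonempty closed convex set Ω ⊆ E, suppose f : E → ℝ is convex and continuous, x* ∈ Ω satisfies f(x*) ≤ f(y) for all y ∈ Ω, there is G > 0 with ‖g_k‖ ≤ G for all k ≥ 1, the errors ē_k := |f_k(x_k) − f(x_k)| + |f_k(x*) − f(x*)| satisfy Σ_{k≥1} ē_k/k < ∞, and for every compact set K ⊆ E one has Σ_{k≥1} (1/k)·sup_{x ∈ K} |f_k(x) − f(x)| < ∞. Then there exists x̂ ∈ Ω with f(x̂) = f(x*) such that x_k → x̂ as k → ∞. -/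
/-!
Write `t_k = α_k ζ_k ∈ [c/k, C/k]` and `e_k(y) = |f_k(x_k) - f(x_k)| + |f_k(y) - f(y)|`.
The subgradient inequality and the nonexpansiveness of the projection give, for every `y ∈ Ω`,
the perturbed Fejér inequality
`‖x_{k+1} - y‖² + 2 t_k (f(x_k) - f(y)) ≤ ‖x_k - y‖² + 2 t_k e_k(y) + t_k² G²`,
whose perturbation is summable as soon as `Σ e_k(y) / k` is.
At `y = x*` it keeps the iterates in a compact set `K` and makes `Σ t_k (f(x_k) - f(x*))` finite;
as `Σ t_k = ∞`, `f(x_k)` comes arbitrarily close to `f(x*)` infinitely often, and compactness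
yields a cluster point `x̂ ∈ Ω` with `f(x̂) = f(x*)`. The uniform error assumption on `K` makes
the perturbation at `y = x̂` summable too, so `‖x_k - x̂‖²` converges, and its limit is `0`
because `x̂` is a cluster point.
-/

open scoped RealInnerProductSpace
open Filter Set Topology

theorem add_sum_range_le_add_sum_range {a b d : ℕ → ℝ}
    (hstep : ∀ k, a (k + 1) + d k ≤ a k + b k) (k : ℕ) :
    a k + ∑ j ∈ Finset.range k, d j ≤ a 0 + ∑ j ∈ Finset.range k, b j := by
  induction k with
  | zero => simp
  | succ k ih =>
    rw [Finset.sum_range_succ, Finset.sum_range_succ]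
    linarith [hstep k]

theorem le_add_tsum_of_add_le_add {a b d : ℕ → ℝ} (hb0 : ∀ k, 0 ≤ b k) (hb : Summable b)
    (hd0 : ∀ k, 0 ≤ d k) (hstep : ∀ k, a (k + 1) + d k ≤ a k + b k) (k : ℕ) :
    a k ≤ a 0 + ∑' j, b j := by
  linarith [add_sum_range_le_add_sum_range hstep k,
    hb.sum_le_tsum (Finset.range k) (fun j _ => hb0 j),
    Finset.sum_nonneg fun j (_ : j ∈ Finset.range k) => hd0 j]

theorem summable_of_add_le_add {a b d : ℕ → ℝ} (ha0 : ∀ k, 0 ≤ a k) (hb0 : ∀ k, 0 ≤ b k)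
    (hb : Summable b) (hd0 : ∀ k, 0 ≤ d k) (hstep : ∀ k, a (k + 1) + d k ≤ a k + b k) :
    Summable d :=
  summable_of_sum_range_le (c := a 0 + ∑' j, b j) hd0 fun k => by
    linarith [add_sum_range_le_add_sum_range hstep k, ha0 k,
      hb.sum_le_tsum (Finset.range k) (fun j _ => hb0 j)]

theorem antitone_add_tsum_nat_add {a b : ℕ → ℝ} (hb : Summable b)
    (hstep : ∀ k, a (k + 1) ≤ a k + b k) : Antitone fun k => a k + ∑' i, b (i + k) := by
  refine antitone_nat_of_succ_le fun k => ?_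
  have htail : ∑' i, b (i + k) = b k + ∑' i, b (i + (k + 1)) := by
    rw [((summable_nat_add_iff k).2 hb).tsum_eq_zero_add]
    simp only [zero_add, add_right_comm _ 1 k, add_assoc]
  linarith [hstep k]

theorem exists_tendsto_of_le_add_summable {a b : ℕ → ℝ} (ha : BddBelow (range a))
    (hb0 : ∀ k, 0 ≤ b k) (hb : Summable b) (hstep : ∀ k, a (k + 1) ≤ a k + b k) :
    ∃ S, Tendsto a atTop (𝓝 S) := by
  obtain ⟨m, hm⟩ := ha
  have hbdd : BddBelow (range fun k => a k + ∑' i, b (i + k)) := by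
    refine ⟨m, ?_⟩
    rintro _ ⟨k, rfl⟩
    linarith [hm ⟨k, rfl⟩, (tsum_nonneg fun i => hb0 (i + k) : 0 ≤ ∑' i, b (i + k))]
  exact ⟨_, by simpa using
    (tendsto_atTop_ciInf (antitone_add_tsum_nat_add hb hstep) hbdd).sub (tendsto_sum_nat_add b)⟩

theorem not_summable_of_div_natCast_succ_le {w : ℕ → ℝ} {c : ℝ} (hc : 0 < c)
    (hw : ∀ k, c / ((k + 1 : ℕ) : ℝ) ≤ w k) : ¬Summable w := by
  intro hs
  have hc_div : Summable fun k : ℕ => c * (1 / ((k + 1 : ℕ) : ℝ)) :=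
    hs.of_nonneg_of_le (fun k => by positivity) fun k => (mul_one_div c _).symm ▸ hw k
  exact Real.not_summable_one_div_natCast <|
    (summable_nat_add_iff 1).1 <| (summable_mul_left_iff hc.ne').1 hc_div

theorem mapClusterPt_of_summable_mul_sub {w d : ℕ → ℝ} {m : ℝ} (hw0 : ∀ k, 0 ≤ w k)
    (hw : ¬Summable w) (hm : ∀ k, m ≤ d k) (hs : Summable fun k => w k * (d k - m)) :
    MapClusterPt m atTop d := by
  rw [Metric.nhds_basis_ball.mapClusterPt_iff_frequently]
  intro ε hε
  by_contra h
  refine hw ((hs.div_const ε).of_norm_bounded_eventually ?_)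
  rw [Nat.cofinite_eq_atTop]
  filter_upwards [not_frequently.1 h] with k hk
  rw [Metric.mem_ball, Real.dist_eq, abs_of_nonneg (sub_nonneg.2 (hm k)), not_lt] at hk
  rw [Real.norm_of_nonneg (hw0 k), le_div_iff₀ hε]
  exact mul_le_mul_of_nonneg_left hk (hw0 k)

theorem mul_mem_Icc_div {α ζ a b c d k : ℝ} (hk : 0 < k) (ha : 0 < a) (hc : 0 < c)
    (hα : α ∈ Icc (a / k) (b / k)) (hζ : ζ ∈ Icc c d) : α * ζ ∈ Icc (a * c / k) (b * d / k) := by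
  have hα0 : 0 ≤ α := (div_pos ha hk).le.trans hα.1
  constructor
  · calc a * c / k = a / k * c := by ring
      _ ≤ α * ζ := mul_le_mul hα.1 hζ.1 hc.le hα0
  · calc α * ζ ≤ b / k * d := mul_le_mul hα.2 hζ.2 (hc.le.trans hζ.1) (hα0.trans hα.2)
      _ = b * d / k := by ring

theorem MapClusterPt.eq_of_tendsto {X α : Type*} [TopologicalSpace X] [T2Space X] {F : Filter α}
    {u : α → X} {x y : X} (hx : MapClusterPt x F u) (hy : Tendsto u F (𝓝 y)) : x = y :=
  eq_of_nhds_neBot (hx.clusterPt.mono hy)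

theorem IsCompact.exists_mapClusterPt_eq_of_mapClusterPt_comp {X Y ι : Type*}
    [TopologicalSpace X] [TopologicalSpace Y] [T2Space Y] {K : Set X} (hK : IsCompact K)
    {l : Filter ι} {u : ι → X} (huK : ∀ᶠ i in l, u i ∈ K) {f : X → Y} (hf : Continuous f)
    {m : Y} (hm : MapClusterPt m l (f ∘ u)) : ∃ z ∈ K, f z = m ∧ MapClusterPt z l u := by
  have : NeBot (l ⊓ comap (f ∘ u) (𝓝 m)) := by
    refine (map_neBot_iff (f ∘ u)).1 ?_
    rw [Filter.push_pull, inf_comm]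
    exact hm
  obtain ⟨z, hzK, hz⟩ := hK.exists_mapClusterPt (f := l ⊓ comap (f ∘ u) (𝓝 m))
    (tendsto_principal.2 (huK.filter_mono inf_le_left))
  exact ⟨z, hzK, (hz.continuousAt_comp hf.continuousAt).eq_of_tendsto
    (tendsto_comap.mono_left inf_le_right), hz.mono inf_le_left⟩

theorem summable_abs_sub_div_of_summable_sSup {X : Type*} [TopologicalSpace X] {K : Set X}
    (hK : IsCompact K) {φ : ℕ → X → ℝ} {f : X → ℝ} (hφ : ∀ k, Continuous (φ k))
    (hf : Continuous f)
    (hsum : Summable fun k : ℕ => (1 / (k : ℝ)) * sSup ((fun z => |φ k z - f z|) '' K))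
    {u : ℕ → X} (hu : ∀ k, u (k + 1) ∈ K) {y : X} (hy : y ∈ K) :
    Summable fun k : ℕ => (|φ k (u k) - f (u k)| + |φ k y - f y|) / k := by
  have hle : ∀ k, ∀ z ∈ K, |φ k z - f z| ≤ sSup ((fun z => |φ k z - f z|) '' K) := fun k z hz =>
    le_csSup ((hK.image ((hφ k).sub hf).abs).bddAbove) (mem_image_of_mem _ hz)
  refine (hsum.mul_left 2).of_nonneg_of_le (fun k => by positivity) fun k => ?_
  cases k with
  | zero => simp
  | succ k =>
    calc (|φ (k + 1) (u (k + 1)) - f (u (k + 1))| + |φ (k + 1) y - f y|) / (k + 1 : ℕ)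
        ≤ 2 * sSup ((fun z => |φ (k + 1) z - f z|) '' K) / (k + 1 : ℕ) := by
          gcongr
          linarith [hle (k + 1) _ (hu k), hle (k + 1) y hy]
      _ = 2 * (1 / ((k + 1 : ℕ) : ℝ) * sSup ((fun z => |φ (k + 1) z - f z|) '' K)) := by ring

theorem tendsto_of_mapClusterPt_of_sq_norm_sub_le {E : Type*} [NormedAddCommGroup E]
    {x : ℕ → E} {y : E} {b : ℕ → ℝ} (hb0 : ∀ k, 0 ≤ b k) (hb : Summable b)
    (hstep : ∀ k, ‖x (k + 1) - y‖ ^ 2 ≤ ‖x k - y‖ ^ 2 + b k) (hy : MapClusterPt y atTop x) :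
    Tendsto x atTop (𝓝 y) := by
  obtain ⟨S, hS⟩ := exists_tendsto_of_le_add_summable (a := fun k => ‖x k - y‖ ^ 2)
    ⟨0, by rintro _ ⟨k, rfl⟩; exact sq_nonneg _⟩ hb0 hb hstep
  have hS0 : 0 = S := by
    simpa using (hy.continuousAt_comp (f := fun z => ‖z - y‖ ^ 2) (by fun_prop)).eq_of_tendsto hS
  subst hS0
  rw [tendsto_iff_norm_sub_tendsto_zero]
  simpa using hS.sqrt

theorem exists_mapClusterPt_of_sq_norm_sub_add_le {E : Type*} [NormedAddCommGroup E]
    [ProperSpace E] {x : ℕ → E} {Ω : Set E} (hΩ : IsClosed Ω) (hxΩ : ∀ k, x k ∈ Ω)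
    {f : E → ℝ} (hf : Continuous f) {y : E} (hy : ∀ k, f y ≤ f (x k)) {w b : ℕ → ℝ}
    (hw0 : ∀ k, 0 ≤ w k) (hw : ¬Summable w) (hb0 : ∀ k, 0 ≤ b k) (hb : Summable b)
    (hstep : ∀ k, ‖x (k + 1) - y‖ ^ 2 + 2 * w k * (f (x k) - f y) ≤ ‖x k - y‖ ^ 2 + b k) :
    ∃ K ⊆ Ω, IsCompact K ∧ (∀ k, x k ∈ K) ∧ ∃ z ∈ K, f z = f y ∧ MapClusterPt z atTop x := by
  set a : ℕ → ℝ := fun k => ‖x k - y‖ ^ 2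
  have hgap : ∀ k, 0 ≤ 2 * w k * (f (x k) - f y) := fun k =>
    mul_nonneg (mul_nonneg zero_le_two (hw0 k)) (sub_nonneg.2 (hy k))
  set K := Metric.closedBall y √(a 0 + ∑' k, b k) ∩ Ω
  have hK : IsCompact K := (isCompact_closedBall _ _).inter_right hΩ
  have hxK : ∀ k, x k ∈ K := fun k => ⟨by
    rw [Metric.mem_closedBall, dist_eq_norm]
    exact Real.le_sqrt_of_sq_le (le_add_tsum_of_add_le_add (a := a) hb0 hb hgap hstep k), hxΩ k⟩
  refine ⟨K, inter_subset_right, hK, hxK, hK.exists_mapClusterPt_eq_of_mapClusterPt_comp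
    (.of_forall hxK) hf ?_⟩
  exact mapClusterPt_of_summable_mul_sub (fun k => mul_nonneg zero_le_two (hw0 k))
    (by rwa [summable_mul_left_iff two_ne_zero]) hy
    (summable_of_add_le_add (a := a) (fun _ => sq_nonneg _) hb0 hb hgap hstep)

section InnerProductSpace

variable {E : Type*} [NormedAddCommGroup E] [InnerProductSpace ℝ E]

theorem sq_norm_sub_add_le_of_subgradient_step {x x' g y : E} {t G : ℝ} {φ f : E → ℝ}
    (ht : 0 ≤ t) (hx' : ‖x' - y‖ ≤ ‖x - t • g - y‖) (hg : φ x + ⟪g, y - x⟫ ≤ φ y)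
    (hG : ‖g‖ ≤ G) :
    ‖x' - y‖ ^ 2 + 2 * t * (f x - f y) ≤
      ‖x - y‖ ^ 2 + 2 * t * (|φ x - f x| + |φ y - f y|) + t ^ 2 * G ^ 2 := by
  have hexpand : ‖x - t • g - y‖ ^ 2 = ‖x - y‖ ^ 2 - 2 * t * ⟪g, x - y⟫ + t ^ 2 * ‖g‖ ^ 2 := by
    rw [sub_right_comm, norm_sub_sq_real, real_inner_smul_right, real_inner_comm, norm_smul,
      mul_pow, Real.norm_eq_abs, sq_abs]
    ring
  have hinner : f x - f y - (|φ x - f x| + |φ y - f y|) ≤ ⟪g, x - y⟫ := by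
    have hyx : ⟪g, y - x⟫ = -⟪g, x - y⟫ := by rw [← inner_neg_right, neg_sub]
    linarith [neg_abs_le (φ x - f x), le_abs_self (φ y - f y)]
  have hproj : ‖x' - y‖ ^ 2 ≤ ‖x - t • g - y‖ ^ 2 := pow_le_pow_left₀ (norm_nonneg _) hx' 2
  have hG2 : t ^ 2 * ‖g‖ ^ 2 ≤ t ^ 2 * G ^ 2 :=
    mul_le_mul_of_nonneg_left (pow_le_pow_left₀ (norm_nonneg _) hG 2) (sq_nonneg t)
  nlinarith [mul_le_mul_of_nonneg_left hinner (mul_nonneg zero_le_two ht)]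

-- Stated for the shifted iterates `k ↦ x (k + 1)`: the data are only constrained from `k = 1` on.
theorem exists_summable_of_projected_subgradient {x g : ℕ → E} {φ : ℕ → E → ℝ} {f : E → ℝ}
    {t : ℕ → ℝ} {C G : ℝ} {y : E} (ht0 : ∀ k, 1 ≤ k → 0 ≤ t k)
    (htC : ∀ k, 1 ≤ k → t k ≤ C / k)
    (hproj : ∀ k, 1 ≤ k → ‖x (k + 1) - y‖ ≤ ‖x k - t k • g k - y‖)
    (hsub : ∀ k, 1 ≤ k → φ k (x k) + ⟪g k, y - x k⟫ ≤ φ k y) (hg : ∀ k, 1 ≤ k → ‖g k‖ ≤ G)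
    (he : Summable fun k : ℕ => (|φ k (x k) - f (x k)| + |φ k y - f y|) / k) :
    ∃ b : ℕ → ℝ, (∀ k, 0 ≤ b k) ∧ Summable b ∧ ∀ k,
      ‖x (k + 1 + 1) - y‖ ^ 2 + 2 * t (k + 1) * (f (x (k + 1)) - f y) ≤
        ‖x (k + 1) - y‖ ^ 2 + b k := by
  set e : ℕ → ℝ := fun k => |φ k (x k) - f (x k)| + |φ k y - f y|
  have he0 : ∀ k, 0 ≤ e k := fun k => by positivity
  have hC : 0 ≤ C := by simpa using (ht0 1 le_rfl).trans (htC 1 le_rfl)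
  refine ⟨fun k => 2 * C * (e (k + 1) / (k + 1 : ℕ)) +
      (C * G) ^ 2 * (1 / ((k + 1 : ℕ) : ℝ) ^ 2),
    fun k => by have := he0 (k + 1); positivity, ?_, fun k => ?_⟩
  · exact (((summable_nat_add_iff 1).2 he).mul_left _).add
      (((summable_nat_add_iff 1).2 (Real.summable_one_div_nat_pow.2 one_lt_two)).mul_left _)
  · have hk : 1 ≤ k + 1 := Nat.le_add_left 1 k
    have hstep := sq_norm_sub_add_le_of_subgradient_step (f := f) (ht0 _ hk) (hproj _ hk)
      (hsub _ hk) (hg _ hk)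
    have htk := htC _ hk
    have herr : 2 * t (k + 1) * e (k + 1) ≤ 2 * C * (e (k + 1) / (k + 1 : ℕ)) :=
      calc 2 * t (k + 1) * e (k + 1) ≤ 2 * (C / (k + 1 : ℕ)) * e (k + 1) := by
            gcongr
        _ = 2 * C * (e (k + 1) / (k + 1 : ℕ)) := by ring
    have hsq : t (k + 1) ^ 2 * G ^ 2 ≤ (C * G) ^ 2 * (1 / ((k + 1 : ℕ) : ℝ) ^ 2) :=
      calc t (k + 1) ^ 2 * G ^ 2 ≤ (C / (k + 1 : ℕ)) ^ 2 * G ^ 2 := by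
            gcongr; exact ht0 _ hk
        _ = (C * G) ^ 2 * (1 / ((k + 1 : ℕ) : ℝ) ^ 2) := by ring
    linarith

end InnerProductSpace

theorem sps_convergence_closed_general {n : ℕ}
    (Ω : Set (EuclideanSpace ℝ (Fin n)))
    (hΩclosed : IsClosed Ω)
    (C1 C2 ζlo ζhi : ℝ)
    (hC1 : 0 < C1) (hζlo : 0 < ζlo)
    (x : ℕ → EuclideanSpace ℝ (Fin n)) (hxΩ : ∀ k, 1 ≤ k → x k ∈ Ω)
    (fk : ℕ → EuclideanSpace ℝ (Fin n) → ℝ)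
    (hfkconv : ∀ k, ConvexOn ℝ Set.univ (fk k))
    (g : ℕ → EuclideanSpace ℝ (Fin n))
    (hsub : ∀ k, 1 ≤ k → ∀ z, fk k (x k) + ⟪g k, z - x k⟫ ≤ fk k z)
    (ζ α : ℕ → ℝ)
    (hζ : ∀ k, 1 ≤ k → ζ k ∈ Set.Icc ζlo ζhi)
    (hα : ∀ k : ℕ, 1 ≤ k → α k ∈ Set.Icc (C1 / (k : ℝ)) (C2 / (k : ℝ)))
    (hproj : ∀ k, 1 ≤ k → ∀ y ∈ Ω,
      ‖x (k + 1) - y‖ ≤ ‖(x k - (α k * ζ k) • g k) - y‖)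
    (f : EuclideanSpace ℝ (Fin n) → ℝ)
    (hfcont : Continuous f)
    (xstar : EuclideanSpace ℝ (Fin n)) (hxstarΩ : xstar ∈ Ω)
    (hmin : ∀ y ∈ Ω, f xstar ≤ f y)
    (G : ℝ) (hgbd : ∀ k, 1 ≤ k → ‖g k‖ ≤ G)
    (ebar : ℕ → ℝ)
    (hebar : ∀ k, ebar k = |fk k (x k) - f (x k)| + |fk k xstar - f xstar|)
    (hesum : Summable (fun k : ℕ => ebar k / k))
    (huccsum : ∀ K : Set (EuclideanSpace ℝ (Fin n)), IsCompact K →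
      Summable (fun k : ℕ => (1 / (k : ℝ)) * sSup ((fun z => |fk k z - f z|) '' K))) :
    ∃ xhat ∈ Ω, f xhat = f xstar ∧ Tendsto x atTop (nhds xhat) := by
  set t : ℕ → ℝ := fun k => α k * ζ k
  have ht : ∀ k : ℕ, 1 ≤ k → t k ∈ Icc (C1 * ζlo / k) (C2 * ζhi / k) := fun k hk =>
    mul_mem_Icc_div (Nat.cast_pos.2 hk) hC1 hζlo (hα k hk) (hζ k hk)
  have ht0 : ∀ k, 1 ≤ k → 0 ≤ t k := fun k hk => (ht k hk).1.trans' (by positivity)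
  have hfejer := fun y (hy : y ∈ Ω) => exists_summable_of_projected_subgradient (f := f) ht0
    (fun k hk => (ht k hk).2) (fun k hk => hproj k hk y hy) (fun k hk => hsub k hk y) hgbd
  obtain ⟨b, hb0, hb, hstep⟩ := hfejer xstar hxstarΩ (by simpa only [hebar] using hesum)
  obtain ⟨K, hKΩ, hK, hxK, xhat, hxhatK, hfxhat, hxhat⟩ :=
    exists_mapClusterPt_of_sq_norm_sub_add_le hΩclosed (fun k => hxΩ _ k.succ_pos) hfcont
      (fun k => hmin _ (hxΩ _ k.succ_pos)) (fun k => ht0 _ k.succ_pos)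
      (not_summable_of_div_natCast_succ_le (by positivity) fun k => (ht _ k.succ_pos).1)
      hb0 hb hstep
  have hfk : ∀ k, Continuous (fk k) := fun k =>
    continuousOn_univ.1 ((hfkconv k).continuousOn isOpen_univ)
  obtain ⟨b', hb'0, hb', hstep'⟩ := hfejer xhat (hKΩ hxhatK)
    (summable_abs_sub_div_of_summable_sSup hK hfk hfcont (huccsum K hK) hxK hxhatK)
  refine ⟨xhat, hKΩ hxhatK, hfxhat, (tendsto_add_atTop_iff_nat 1).1 <|
    tendsto_of_mapClusterPt_of_sq_norm_sub_le hb'0 hb' (fun k => ?_) hxhat⟩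
  have hgap : 0 ≤ 2 * t (k + 1) * (f (x (k + 1)) - f xhat) :=
    mul_nonneg (mul_nonneg zero_le_two (ht0 _ k.succ_pos))
      (sub_nonneg.2 (hfxhat ▸ hmin _ (hxΩ _ k.succ_pos)))
  linarith [hstep' k]

/-- Theorem 4, part 2 (pathwise): SPS iteration on a nonempty closed convex set; with
summable errors `Σ ē_k/k < ∞` and summable weighted uniform errors on compact sets,
the iterates converge to a minimizer. -/
theorem sps_convergence_closed {n : ℕ}
    (Ω : Set (EuclideanSpace ℝ (Fin n)))
    (hΩne : Ω.Nonempty) (hΩclosed : IsClosed Ω) (hΩconv : Convex ℝ Ω)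
    (C1 C2 ζlo ζhi : ℝ)
    (hC1 : 0 < C1) (hC12 : C1 ≤ C2) (hζlo : 0 < ζlo) (hζlohi : ζlo ≤ ζhi)
    (x : ℕ → EuclideanSpace ℝ (Fin n)) (hxΩ : ∀ k, 1 ≤ k → x k ∈ Ω)
    (fk : ℕ → EuclideanSpace ℝ (Fin n) → ℝ)
    (hfkconv : ∀ k, ConvexOn ℝ Set.univ (fk k))
    (g : ℕ → EuclideanSpace ℝ (Fin n))
    (hsub : ∀ k, 1 ≤ k → ∀ z, fk k (x k) + ⟪g k, z - x k⟫ ≤ fk k z)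
    (ζ α : ℕ → ℝ)
    (hζ : ∀ k, 1 ≤ k → ζ k ∈ Set.Icc ζlo ζhi)
    (hα : ∀ k : ℕ, 1 ≤ k → α k ∈ Set.Icc (C1 / (k : ℝ)) (C2 / (k : ℝ)))
    (hproj : ∀ k, 1 ≤ k → ∀ y ∈ Ω,
      ‖x (k + 1) - y‖ ≤ ‖(x k - (α k * ζ k) • g k) - y‖)
    (f : EuclideanSpace ℝ (Fin n) → ℝ)
    (hfconv : ConvexOn ℝ Set.univ f) (hfcont : Continuous f)
    (xstar : EuclideanSpace ℝ (Fin n)) (hxstarΩ : xstar ∈ Ω)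
    (hmin : ∀ y ∈ Ω, f xstar ≤ f y)
    (G : ℝ) (hG : 0 < G) (hgbd : ∀ k, 1 ≤ k → ‖g k‖ ≤ G)
    (ebar : ℕ → ℝ)
    (hebar : ∀ k, ebar k = |fk k (x k) - f (x k)| + |fk k xstar - f xstar|)
    (hesum : Summable (fun k : ℕ => ebar k / k))
    (huccsum : ∀ K : Set (EuclideanSpace ℝ (Fin n)), IsCompact K →
      Summable (fun k : ℕ => (1 / (k : ℝ)) * sSup ((fun z => |fk k z - f z|) '' K))) :
    ∃ xhat ∈ Ω, f xhat = f xstar ∧ Tendsto x atTop (nhds xhat) :=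
  sps_convergence_closed_general Ω hΩclosed C1 C2 ζlo ζhi hC1 hζlo x hxΩ fk hfkconv g hsub ζ α hζ hα
    hproj f hfcont xstar hxstarΩ hmin G hgbd ebar hebar hesum huccsum
end
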